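/- Let X →u Y →v Z →w X[1] be an Auslander–Reiten triangle in K_I(P), where u and v denote chain-map representatives in C_I(P). Suppose u is sirreducible with its unique irreducible component u^i : X^i → Y^i in degree i, and v is smonic. Then X^j = 0 for all j > i, Y^j = 0 for all j < i, and Z is isomorphic in K_I(P) to the complex W with W^j = X^{j+1} for j < i and W^j = Y^j for j ≥ i, whose differential is -d_X^{j+1} in degrees j < i-1, is u^i : X^i → Y^i in degree i-1, and is d_Y^j in degrees j ≥ i. -/

import Mathlib

/-!
A distinguished triangle `X →u Y →v Z → X[1]` gives a null-homotopy of `u ≫ v`. Since the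
differentials of the minimal complexes `X` and `Z` land in the radical `r`, so does every
component of `u ≫ v`, and since `v` is split injective in each degree, so does every component
`u^j`. Nakayama's lemma then kills `Y^j` wherever `u^j` is split surjective (`j < i`) and `X^j`
wherever `u^j` is split injective (`j > i`). With these vanishings the mapping cone of `u` is, on
the nose, the complex `W`, and `Z` is isomorphic to that cone in the homotopy category.
-/

open CategoryTheory CategoryTheory.Limits CategoryTheory.Pretriangulated

namespace ARShapes

variable {Λ : Type} [Ring Λ]

/-- Cochain complexes of (right) `Λ`-modules, i.e. `Λᵐᵒᵖ`-modules, indexed by `ℤ`. -/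
abbrev Cplx (Λ : Type) [Ring Λ] : Type 1 := CochainComplex (ModuleCat Λᵐᵒᵖ) ℤ

/-- A minimal projective complex: a complex of finitely generated projective right
`Λ`-modules whose differentials have image contained in the radical of the target. -/
def IsMinimalProjective (X : Cplx Λ) : Prop :=
  (∀ i : ℤ, Module.Finite Λᵐᵒᵖ (X.X i)) ∧ (∀ i : ℤ, Module.Projective Λᵐᵒᵖ (X.X i)) ∧
    (∀ i : ℤ, LinearMap.range (X.d i (i + 1)).hom ≤
      (Ideal.jacobson (⊥ : Ideal Λᵐᵒᵖ)) • (⊤ : Submodule Λᵐᵒᵖ (X.X (i + 1))))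

/-- Irreducibility of a morphism in the category `P` of finitely generated projective
right `Λ`-modules (a full subcategory of all modules). -/
def IrreducibleP {M N : ModuleCat Λᵐᵒᵖ} (φ : M ⟶ N) : Prop :=
  ¬ IsSplitMono φ ∧ ¬ IsSplitEpi φ ∧
    ∀ (Z : ModuleCat Λᵐᵒᵖ), Module.Finite Λᵐᵒᵖ Z → Module.Projective Λᵐᵒᵖ Z →
      ∀ (g : M ⟶ Z) (h : Z ⟶ N), φ = g ≫ h → IsSplitMono g ∨ IsSplitEpi h

/-- A chain map is smonic if all of its components are split monomorphisms. -/
def Smonic {X Y : Cplx Λ} (f : X ⟶ Y) : Prop := ∀ i : ℤ, IsSplitMono (f.f i)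

/-- A chain map is sepic if all of its components are split epimorphisms. -/
def Sepic {X Y : Cplx Λ} (f : X ⟶ Y) : Prop := ∀ i : ℤ, IsSplitEpi (f.f i)

/-- A chain map is sirreducible if there is exactly one index `i₀` where the component is
irreducible in the category of finitely generated projective modules, the components in lower
degrees being split epimorphisms and those in higher degrees split monomorphisms. -/
def Sirreducible {X Y : Cplx Λ} (f : X ⟶ Y) : Prop :=
  ∃ i₀ : ℤ, IrreducibleP (f.f i₀) ∧ (∀ i : ℤ, i < i₀ → IsSplitEpi (f.f i)) ∧
    (∀ i : ℤ, i₀ < i → IsSplitMono (f.f i))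

/-- An object of a preadditive category is indecomposable if it is nonzero and, whenever it is
exhibited as a biproduct of two objects (via inclusions and projections satisfying the biproduct
identities), one of the two summands is zero. -/
def Indecomposable {K : Type*} [Category K] [Preadditive K] (Z : K) : Prop :=
  ¬ IsZero Z ∧ ∀ (A B : K) (i : A ⟶ Z) (j : B ⟶ Z) (p : Z ⟶ A) (q : Z ⟶ B),
    i ≫ p = 𝟙 A → j ≫ q = 𝟙 B → i ≫ q = 0 → j ≫ p = 0 → p ≫ i + q ≫ j = 𝟙 Z →
    IsZero A ∨ IsZero B

/-- The quotient functor from minimal projective complexes to the homotopy category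
`K_I(P)` (realized inside the homotopy category of all complexes, of which `K_I(P)` is a full
subcategory; in particular distinguished triangles, isomorphisms, split epimorphisms and
zero-ness of morphisms in `K_I(P)` agree with those in the ambient homotopy category). -/
noncomputable abbrev Q (Λ : Type) [Ring Λ] :
    Cplx Λ ⥤ HomotopyCategory (ModuleCat Λᵐᵒᵖ) (ComplexShape.up ℤ) :=
  HomotopyCategory.quotient (ModuleCat Λᵐᵒᵖ) (ComplexShape.up ℤ)

/-- `X →u Y →v Z →w X[1]` is an Auslander-Reiten triangle in `K_I(P)`: it is a distinguished
triangle, the end terms `X` and `Z` are indecomposable, the connecting morphism `w` is nonzero,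
and every morphism `W → Z` from an object of `K_I(P)` that is not a split epimorphism factors
through `v`. -/
def IsARTriangle {X Y Z : Cplx Λ} (u : X ⟶ Y) (v : Y ⟶ Z)
    (w : (Q Λ).obj Z ⟶ ((Q Λ).obj X)⟦(1 : ℤ)⟧) : Prop :=
  (Triangle.mk ((Q Λ).map u) ((Q Λ).map v) w ∈
    distTriang (HomotopyCategory (ModuleCat Λᵐᵒᵖ) (ComplexShape.up ℤ))) ∧
  Indecomposable ((Q Λ).obj X) ∧ Indecomposable ((Q Λ).obj Z) ∧ w ≠ 0 ∧
  ∀ (W : Cplx Λ), IsMinimalProjective W →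
    ∀ (φ : (Q Λ).obj W ⟶ (Q Λ).obj Z), ¬ IsSplitEpi φ →
      ∃ ψ : (Q Λ).obj W ⟶ (Q Λ).obj Y, ψ ≫ (Q Λ).map v = φ

/-- The components of the complex `W`: `W^j = X^{j+1}` for `j < i` and `W^j = Y^j`
for `j ≥ i`. -/
abbrev WX (X Y : Cplx Λ) (i j : ℤ) : ModuleCat Λᵐᵒᵖ :=
  if j < i then X.X (j + 1) else Y.X j

/-- The differential of the complex `W`: it is `-d_X^{j+1}` in degrees `j < i - 1`,
`u^i : X^i ⟶ Y^i` in degree `i - 1`, and `d_Y^j` in degrees `j ≥ i`. -/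
noncomputable def Wd {X Y : Cplx Λ} (u : X ⟶ Y) (i j : ℤ) :
    WX X Y i j ⟶ WX X Y i (j + 1) :=
  if h1 : j + 1 < i then
    eqToHom (if_pos (show j < i by omega)) ≫ (-(X.d (j + 1) (j + 1 + 1))) ≫
      eqToHom (if_pos h1).symm
  else if h2 : j < i then
    eqToHom (if_pos h2) ≫ u.f (j + 1) ≫ eqToHom (if_neg h1).symm
  else
    eqToHom (if_neg h2) ≫ Y.d j (j + 1) ≫ eqToHom (if_neg h1).symm

lemma Wsq {X Y : Cplx Λ} (u : X ⟶ Y) (i : ℤ)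
    (h1 : ∀ j : ℤ, i < j → IsZero (X.X j)) (h2 : ∀ j : ℤ, j < i → IsZero (Y.X j)) (j : ℤ) :
    Wd u i j ≫ Wd u i (j + 1) = 0 := by
  dsimp only [Wd]
  split_ifs with hA hC hC' hB hC''
  · -- degrees `< i - 2`: `(-d_X) ≫ (-d_X) = 0`
    simp only [Category.assoc, eqToHom_trans_assoc, eqToHom_refl, Category.id_comp,
      Preadditive.neg_comp, Preadditive.comp_neg, neg_neg]
    rw [HomologicalComplex.d_comp_d_assoc]
    simp
  · -- degree `i - 2`: `(-d_X) ≫ u^i = 0` since `u^{i-1}` lands in `Y^{i-1} = 0`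
    have h0 : u.f (j + 1) = 0 := (h2 (j + 1) hA).eq_of_tgt _ _
    have h0' : X.d (j + 1) (j + 1 + 1) ≫ u.f (j + 1 + 1) = 0 := by
      rw [← HomologicalComplex.Hom.comm, h0, zero_comp]
    simp only [Category.assoc, eqToHom_trans_assoc, eqToHom_refl, Category.id_comp,
      Preadditive.neg_comp, Preadditive.comp_neg, neg_eq_zero]
    rw [reassoc_of% h0']
    simp
  · omega
  · -- degree `i - 1`: `u^i ≫ d_Y = 0` since `d_X` lands in `X^{i+1} = 0`
    have h0 : X.d (j + 1) (j + 1 + 1) = 0 := (h1 (j + 1 + 1) (by omega)).eq_of_tgt _ _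
    have h0' : u.f (j + 1) ≫ Y.d (j + 1) (j + 1 + 1) = 0 := by
      rw [HomologicalComplex.Hom.comm, h0, zero_comp]
    simp only [Category.assoc, eqToHom_trans_assoc, eqToHom_refl, Category.id_comp]
    rw [reassoc_of% h0']
    simp
  · omega
  · -- degrees `≥ i`: `d_Y ≫ d_Y = 0`
    simp only [Category.assoc, eqToHom_trans_assoc, eqToHom_refl, Category.id_comp]
    rw [HomologicalComplex.d_comp_d_assoc]
    simp

/-- The complex `W` with `W^j = X^{j+1}` for `j < i` and `W^j = Y^j` for `j ≥ i`, whose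
differential is `-d_X^{j+1}` in degrees `j < i - 1`, `u^i` in degree `i - 1`, and `d_Y^j`
in degrees `j ≥ i`. -/
noncomputable def Wcplx {X Y : Cplx Λ} (u : X ⟶ Y) (i : ℤ)
    (h1 : ∀ j : ℤ, i < j → IsZero (X.X j)) (h2 : ∀ j : ℤ, j < i → IsZero (Y.X j)) : Cplx Λ :=
  CochainComplex.of (WX X Y i) (Wd u i) (Wsq u i h1 h2)

end ARShapes

namespace ModuleCat

variable {R : Type*} [Ring R] {I : Ideal R} {M N P : ModuleCat R}

lemma range_comp_le_smul_top_of_left {f : M ⟶ N} (g : N ⟶ P)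
    (hf : LinearMap.range f.hom ≤ I • ⊤) : LinearMap.range (f ≫ g).hom ≤ I • ⊤ := by
  rw [hom_comp, LinearMap.range_comp]
  refine (Submodule.map_mono hf).trans ?_
  rw [Submodule.map_smul'']
  exact Submodule.smul_mono le_rfl le_top

lemma range_comp_le_smul_top_of_right (f : M ⟶ N) {g : N ⟶ P}
    (hg : LinearMap.range g.hom ≤ I • ⊤) : LinearMap.range (f ≫ g).hom ≤ I • ⊤ :=
  (LinearMap.range_comp_le_range _ _).trans hg

lemma range_le_smul_top_of_comp_isSplitMono {f : M ⟶ N} (s : N ⟶ P) [IsSplitMono s]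
    (h : LinearMap.range (f ≫ s).hom ≤ I • ⊤) : LinearMap.range f.hom ≤ I • ⊤ := by
  simpa using range_comp_le_smul_top_of_left (retraction s) h

lemma isZero_of_top_le_jacobson_smul [Module.Finite R M]
    (h : (⊤ : Submodule R M) ≤ (⊥ : Ideal R).jacobson • ⊤) : IsZero M := by
  rw [Ideal.jacobson_bot] at h
  have htop : (⊤ : Submodule R M) = ⊥ :=
    Submodule.FG.eq_bot_of_le_jacobson_smul Module.Finite.fg_top h
  have : Subsingleton M :=
    (Submodule.subsingleton_iff R).mp (subsingleton_iff_bot_eq_top.mp htop.symm)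
  exact isZero_of_subsingleton M

lemma isZero_of_isSplitEpi_of_range_le [Module.Finite R N] (f : M ⟶ N) [IsSplitEpi f]
    (h : LinearMap.range f.hom ≤ (⊥ : Ideal R).jacobson • ⊤) : IsZero N :=
  isZero_of_top_le_jacobson_smul (by simpa using range_comp_le_smul_top_of_right (section_ f) h)

lemma isZero_of_isSplitMono_of_range_le [Module.Finite R M] (f : M ⟶ N) [IsSplitMono f]
    (h : LinearMap.range f.hom ≤ (⊥ : Ideal R).jacobson • ⊤) : IsZero M :=
  isZero_of_top_le_jacobson_smul (by simpa using range_comp_le_smul_top_of_left (retraction f) h)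

end ModuleCat

lemma Homotopy.range_f_le_smul_top {R : Type*} [Ring R] {I : Ideal R}
    {X Z : CochainComplex (ModuleCat R) ℤ} {f : X ⟶ Z} (H : Homotopy f 0)
    (hX : ∀ j, LinearMap.range (X.d j (j + 1)).hom ≤ I • ⊤)
    (hZ : ∀ j, LinearMap.range (Z.d j (j + 1)).hom ≤ I • ⊤) (j : ℤ) :
    LinearMap.range (f.f j).hom ≤ I • ⊤ := by
  obtain ⟨k, rfl⟩ : ∃ k, j = k + 1 := ⟨j - 1, by omega⟩
  have hf : f.f (k + 1) = X.d (k + 1) (k + 1 + 1) ≫ H.hom (k + 1 + 1) (k + 1) +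
      H.hom (k + 1) k ≫ Z.d k (k + 1) := by
    simpa [dNext_eq H.hom (show (ComplexShape.up ℤ).Rel (k + 1) (k + 1 + 1) from rfl),
      prevD_eq H.hom (show (ComplexShape.up ℤ).Rel k (k + 1) from rfl)] using H.comm (k + 1)
  rw [hf, ModuleCat.hom_add]
  exact (LinearMap.range_add_le _ _).trans (sup_le
    (ModuleCat.range_comp_le_smul_top_of_left _ (hX (k + 1)))
    (ModuleCat.range_comp_le_smul_top_of_right _ (hZ k)))

namespace HomotopyCategory

open CochainComplex

variable {C : Type*} [Category C] [Preadditive C] [HasZeroObject C] [HasBinaryBiproducts C]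

noncomputable def isoMappingConeOfDistTriang {X Y Z : CochainComplex C ℤ} (u : X ⟶ Y)
    (v : Y ⟶ Z) (w : (quotient C (ComplexShape.up ℤ)).obj Z ⟶
      ((quotient C (ComplexShape.up ℤ)).obj X)⟦(1 : ℤ)⟧)
    (h : Triangle.mk ((quotient C _).map u) ((quotient C _).map v) w ∈ distTriang _) :
    (quotient C _).obj Z ≅ (quotient C _).obj (mappingCone u) :=
  Triangle.π₃.mapIso (isoTriangleOfIso₁₂ _ _ h (mappingCone_triangleh_distinguished u)
    (Iso.refl _) (Iso.refl _) ((Category.comp_id _).trans (Category.id_comp _).symm))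

end HomotopyCategory

namespace ARShapes

open CochainComplex CochainComplex.mappingCone

variable {Λ : Type} [Ring Λ] {X Y : Cplx Λ} (u : X ⟶ Y) (i : ℤ)
  (h1 : ∀ j : ℤ, i < j → IsZero (X.X j)) (h2 : ∀ j : ℤ, j < i → IsZero (Y.X j))

noncomputable def Wcplx.toMappingCone : Wcplx u i h1 h2 ⟶ mappingCone u where
  f j := if hj : j < i then eqToHom (if_pos hj) ≫ (inl u).v (j + 1) j (by omega)
         else eqToHom (if_neg hj) ≫ (inr u).f j
  comm' := by
    rintro j _ (rfl : j + 1 = _)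
    rw [show (Wcplx u i h1 h2).d j (j + 1) = Wd u i j from CochainComplex.of_d _ _ _, Wd]
    have hinl := inl_v_d u (j + 1) j (j + 1 + 1) (by omega) (by omega)
    by_cases hA : j + 1 < i
    · have hu : u.f (j + 1) = 0 := (h2 (j + 1) hA).eq_of_tgt _ _
      simp [Wcplx, hA, show j < i by omega, hinl, hu]
    by_cases hj : j < i
    · have hd : X.d (j + 1) (j + 1 + 1) = 0 := (h1 (j + 1 + 1) (by omega)).eq_of_tgt _ _
      simp [Wcplx, hA, hj, hinl, hd]
    · simp [Wcplx, hA, hj]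

instance Wcplx.isIso_toMappingCone : IsIso (Wcplx.toMappingCone u i h1 h2) := by
  suffices ∀ n, IsIso ((Wcplx.toMappingCone u i h1 h2).f n) from
    HomologicalComplex.Hom.isIso_of_components _
  intro n
  have hid := id_X u n (n + 1) rfl
  by_cases hn : n < i
  · have hY : (inr u).f n = 0 := (h2 n hn).eq_of_src _ _
    refine ⟨(fst u).1.v n (n + 1) rfl ≫ eqToHom (if_pos hn).symm, ?_, ?_⟩
    · simp [Wcplx, toMappingCone, hn]
    · simp [Wcplx, toMappingCone, hn, ← hid, hY]
  · have hX : (fst u).1.v n (n + 1) rfl = 0 := (h1 (n + 1) (by omega)).eq_of_tgt _ _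
    refine ⟨(snd u).v n n (add_zero n) ≫ eqToHom (if_neg hn).symm, ?_, ?_⟩
    · simp [Wcplx, toMappingCone, hn]
    · simp [Wcplx, toMappingCone, hn, ← hid, hX]

theorem AR_sirreducible_smonic_shape
    {Λ : Type} [Ring Λ]
    (X Y Z : Cplx Λ)
    (hX : IsMinimalProjective X) (hY : IsMinimalProjective Y) (hZ : IsMinimalProjective Z)
    (u : X ⟶ Y) (v : Y ⟶ Z) (w : (Q Λ).obj Z ⟶ ((Q Λ).obj X)⟦(1 : ℤ)⟧)
    (hAR : IsARTriangle u v w) (i : ℤ)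
    (hlt : ∀ j : ℤ, j < i → IsSplitEpi (u.f j))
    (hgt : ∀ j : ℤ, i < j → IsSplitMono (u.f j))
    (hv : Smonic v) :
    ∃ (h1 : ∀ j : ℤ, i < j → IsZero (X.X j)) (h2 : ∀ j : ℤ, j < i → IsZero (Y.X j)),
      Nonempty ((Q Λ).obj Z ≅ (Q Λ).obj (Wcplx u i h1 h2)) := by
  obtain ⟨hdist, -⟩ := hAR
  have H : Homotopy (u ≫ v) 0 := HomotopyCategory.homotopyOfEq _ _
    (by rw [Functor.map_comp, Functor.map_zero]; exact comp_distTriang_mor_zero₁₂ _ hdist)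
  have hu (j : ℤ) : LinearMap.range (u.f j).hom ≤ (⊥ : Ideal Λᵐᵒᵖ).jacobson • ⊤ :=
    have := hv j
    ModuleCat.range_le_smul_top_of_comp_isSplitMono (v.f j)
      (H.range_f_le_smul_top hX.2.2 hZ.2.2 j)
  have h1 (j : ℤ) (hj : i < j) : IsZero (X.X j) :=
    have := hX.1 j; have := hgt j hj
    ModuleCat.isZero_of_isSplitMono_of_range_le (u.f j) (hu j)
  have h2 (j : ℤ) (hj : j < i) : IsZero (Y.X j) :=
    have := hY.1 j; have := hlt j hj
    ModuleCat.isZero_of_isSplitEpi_of_range_le (u.f j) (hu j)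
  exact ⟨h1, h2, ⟨HomotopyCategory.isoMappingConeOfDistTriang u v w hdist ≪≫
    ((Q Λ).mapIso (asIso (Wcplx.toMappingCone u i h1 h2))).symm⟩⟩

end ARShapes
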